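/- arXiv:math/0006135 — 5 statements merged into one kernel-verified Lean document; each statement's English description precedes it below -/
import Mathlib

section
/- Let V be a finite-dimensional vector space over ℚ with complexification V_ℂ = ℂ ⊗_ℚ V, and let W ⊆ V_ℂ be a ℂ-linear subspace. Let L(W) denote the smallest ℚ-subspace of V containing L(w) for every w ∈ W. Then the set {w ∈ W : L(w) ≠ L(W)} is contained in the union of a countable family of proper ℂ-subspaces of W; in particular there exists w ∈ W with L(w) = L(W). -/
open TensorProduct

/-!
A `ℚ`-basis of `ℂ` identifies `ℂ ⊗[ℚ] V` with finitely supported families in `V`, and `w` lies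
in `L_ℂ` iff all its coordinates lie in `L`. Hence base change commutes with intersections,
`L(w) ≤ L ↔ w ∈ L_ℂ`, and the exceptional set is covered by the proper subspaces `W ⊓ L_ℂ`,
one for each of the countably many rational `L` not containing `L(W)`.

On a line `w₁ + z • w₂` uncountably many `z` share countably many envelopes, and two parameters
with the same envelope put `w₁` and `w₂` into it; so `L(w₁) ⊔ L(w₂)` is the envelope of an
element of `W`. The envelopes of elements of `W` are thus closed under `⊔`, and in the Noetherian
lattice of `ℚ`-subspaces of `V` such a family contains its supremum `L(W)`.
-/

/-- The rational envelope `L(w)` of an element `w` of the complexification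
`V_ℂ = ℂ ⊗[ℚ] V`: the smallest `ℚ`-subspace `L ⊆ V` with `w ∈ L_ℂ`. -/
noncomputable def rationalEnvelope (V : Type*) [AddCommGroup V] [Module ℚ V]
    (w : ℂ ⊗[ℚ] V) : Submodule ℚ V :=
  sInf {L : Submodule ℚ V | w ∈ L.baseChange ℂ}

/-- The rational envelope `L(W)` of a subset `W` of the complexification: the smallest
`ℚ`-subspace of `V` containing `L(w)` for all `w ∈ W`. -/
noncomputable def rationalEnvelopeSet (V : Type*) [AddCommGroup V] [Module ℚ V]
    (W : Set (ℂ ⊗[ℚ] V)) : Submodule ℚ V :=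
  ⨆ w ∈ W, rationalEnvelope V w

namespace Submodule

variable {R A M : Type*} [CommSemiring R] [Semiring A] [Algebra R A] [AddCommMonoid M] [Module R M]

theorem mem_baseChange_iff_forall_equivFinsuppOfBasisLeft_mem {ι : Type*} [DecidableEq ι]
    (b : Module.Basis ι R A) {p : Submodule R M} {x : A ⊗[R] M} :
    x ∈ p.baseChange A ↔ ∀ i, equivFinsuppOfBasisLeft b x i ∈ p := by
  constructor
  · rintro ⟨y, rfl⟩ i
    induction y using TensorProduct.induction_on with
    | zero => simp
    | tmul a m =>
      simpa [equivFinsuppOfBasisLeft_apply_tmul_apply] using p.smul_mem _ m.2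
    | add y z hy hz => simpa using p.add_mem hy hz
  · intro h
    rw [← (equivFinsuppOfBasisLeft b).symm_apply_apply x, equivFinsuppOfBasisLeft_symm_apply]
    exact sum_mem fun i _ => tmul_mem_baseChange_of_mem _ (h i)

theorem baseChange_sInf [Module.Free R A] (S : Set (Submodule R M)) :
    (sInf S).baseChange A = ⨅ p ∈ S, p.baseChange A := by
  classical
  ext x
  simp only [mem_iInf, mem_baseChange_iff_forall_equivFinsuppOfBasisLeft_mem
    (Module.Free.chooseBasis R A), mem_sInf]
  exact ⟨fun h p hp i => h i p hp, fun h i p hp => h p hp i⟩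

theorem countable_of_isNoetherian [Countable R] [IsNoetherian R M] :
    Countable (Submodule R M) :=
  have : Countable M := Finsupp.Countable.of_moduleFinite (R := R)
  Function.Surjective.countable (f := fun s : Finset M => span R (s : Set M))
    fun p => IsNoetherian.noetherian p

end Submodule

section RationalEnvelope

variable {V : Type*} [AddCommGroup V] [Module ℚ V]

theorem mem_baseChange_rationalEnvelope (w : ℂ ⊗[ℚ] V) :
    w ∈ (rationalEnvelope V w).baseChange ℂ := by
  rw [rationalEnvelope, Submodule.baseChange_sInf]
  simp only [Submodule.mem_iInf]
  exact fun _ hL => hL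

theorem rationalEnvelope_le_iff {w : ℂ ⊗[ℚ] V} {L : Submodule ℚ V} :
    rationalEnvelope V w ≤ L ↔ w ∈ L.baseChange ℂ :=
  ⟨fun h => Submodule.baseChange_mono ℂ h (mem_baseChange_rationalEnvelope w),
    fun h => sInf_le h⟩

theorem rationalEnvelope_le_rationalEnvelopeSet {W : Set (ℂ ⊗[ℚ] V)} {w : ℂ ⊗[ℚ] V}
    (hw : w ∈ W) : rationalEnvelope V w ≤ rationalEnvelopeSet V W :=
  le_biSup (rationalEnvelope V) hw

theorem rationalEnvelopeSet_le_iff {W : Set (ℂ ⊗[ℚ] V)} {L : Submodule ℚ V} :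
    rationalEnvelopeSet V W ≤ L ↔ W ⊆ L.baseChange ℂ := by
  simp only [rationalEnvelopeSet, iSup₂_le_iff, rationalEnvelope_le_iff, Set.subset_def,
    SetLike.mem_coe]

theorem rationalEnvelope_add_smul_le_sup (w₁ w₂ : ℂ ⊗[ℚ] V) (z : ℂ) :
    rationalEnvelope V (w₁ + z • w₂) ≤ rationalEnvelope V w₁ ⊔ rationalEnvelope V w₂ :=
  rationalEnvelope_le_iff.2 <|
    add_mem (Submodule.baseChange_mono ℂ le_sup_left (mem_baseChange_rationalEnvelope w₁))
      (Submodule.smul_mem _ z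
        (Submodule.baseChange_mono ℂ le_sup_right (mem_baseChange_rationalEnvelope w₂)))

theorem sup_le_rationalEnvelope_add_smul {w₁ w₂ : ℂ ⊗[ℚ] V} {z z' : ℂ} (hzz' : z ≠ z')
    (h : rationalEnvelope V (w₁ + z • w₂) = rationalEnvelope V (w₁ + z' • w₂)) :
    rationalEnvelope V w₁ ⊔ rationalEnvelope V w₂ ≤ rationalEnvelope V (w₁ + z • w₂) := by
  set L := rationalEnvelope V (w₁ + z • w₂)
  have h₁ : w₁ + z • w₂ ∈ L.baseChange ℂ := mem_baseChange_rationalEnvelope _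
  have h₂ : w₁ + z' • w₂ ∈ L.baseChange ℂ := h ▸ mem_baseChange_rationalEnvelope _
  have hw₂ : w₂ ∈ L.baseChange ℂ := by
    have hsub := Submodule.smul_mem _ (z - z')⁻¹ (Submodule.sub_mem _ h₁ h₂)
    rwa [add_sub_add_left_eq_sub, ← sub_smul, smul_smul,
      inv_mul_cancel₀ (sub_ne_zero.2 hzz'), one_smul] at hsub
  have hw₁ : w₁ ∈ L.baseChange ℂ := by
    simpa using Submodule.sub_mem _ h₁ (Submodule.smul_mem _ z hw₂)
  exact sup_le (rationalEnvelope_le_iff.2 hw₁) (rationalEnvelope_le_iff.2 hw₂)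

theorem inf_baseChange_ne_of_not_rationalEnvelopeSet_le {W : Submodule ℂ (ℂ ⊗[ℚ] V)}
    {L : Submodule ℚ V} (h : ¬ rationalEnvelopeSet V (W : Set (ℂ ⊗[ℚ] V)) ≤ L) :
    W ⊓ L.baseChange ℂ ≠ W :=
  fun hW => h (rationalEnvelopeSet_le_iff.2 (SetLike.coe_subset_coe.2 (inf_eq_left.1 hW)))

theorem setOf_rationalEnvelope_ne_subset_iUnion (W : Submodule ℂ (ℂ ⊗[ℚ] V)) :
    {w ∈ (W : Set (ℂ ⊗[ℚ] V)) |
        rationalEnvelope V w ≠ rationalEnvelopeSet V (W : Set (ℂ ⊗[ℚ] V))} ⊆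
      ⋃ L : {L : Submodule ℚ V // ¬ rationalEnvelopeSet V (W : Set (ℂ ⊗[ℚ] V)) ≤ L},
        ((W ⊓ L.1.baseChange ℂ : Submodule ℂ (ℂ ⊗[ℚ] V)) : Set (ℂ ⊗[ℚ] V)) := by
  rintro w ⟨hw, hne⟩
  exact Set.mem_iUnion.2 ⟨⟨rationalEnvelope V w,
    fun h => hne (le_antisymm (rationalEnvelope_le_rationalEnvelopeSet hw) h)⟩,
    hw, mem_baseChange_rationalEnvelope w⟩

variable [FiniteDimensional ℚ V]

theorem exists_rationalEnvelope_add_smul_eq_sup (w₁ w₂ : ℂ ⊗[ℚ] V) :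
    ∃ z : ℂ,
      rationalEnvelope V (w₁ + z • w₂) = rationalEnvelope V w₁ ⊔ rationalEnvelope V w₂ := by
  have : Countable (Submodule ℚ V) := Submodule.countable_of_isNoetherian
  have : Uncountable ℂ := Complex.ofReal_injective.uncountable
  obtain ⟨z, z', h, hzz'⟩ := Function.not_injective_iff.1 <|
    not_injective_uncountable_countable fun z : ℂ => rationalEnvelope V (w₁ + z • w₂)
  exact ⟨z, le_antisymm (rationalEnvelope_add_smul_le_sup w₁ w₂ z)
    (sup_le_rationalEnvelope_add_smul hzz' h)⟩

theorem exists_rationalEnvelope_eq_rationalEnvelopeSet (W : Submodule ℂ (ℂ ⊗[ℚ] V)) :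
    ∃ w ∈ W, rationalEnvelope V w = rationalEnvelopeSet V (W : Set (ℂ ⊗[ℚ] V)) := by
  have hsupClosed : SupClosed (rationalEnvelope V '' W) := by
    rintro _ ⟨w₁, hw₁, rfl⟩ _ ⟨w₂, hw₂, rfl⟩
    obtain ⟨z, hz⟩ := exists_rationalEnvelope_add_smul_eq_sup w₁ w₂
    exact ⟨w₁ + z • w₂, W.add_mem hw₁ (W.smul_mem z hw₂), hz⟩
  have hmem : sSup (rationalEnvelope V '' W) ∈ rationalEnvelope V '' W :=
    (CompleteLattice.isSupClosedCompact_iff_wellFoundedGT (Submodule ℚ V)).2 inferInstance _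
      ⟨_, Set.mem_image_of_mem _ W.zero_mem⟩ hsupClosed
  rwa [sSup_image] at hmem

end RationalEnvelope

/-- For a `ℂ`-subspace `W` of the complexification `V_ℂ` of a finite-dimensional
`ℚ`-vector space `V`, the set of `w ∈ W` whose rational envelope `L(w)` is strictly
smaller than `L(W)` is covered by a countable family of proper `ℂ`-subspaces of `W`;
in particular some `w ∈ W` satisfies `L(w) = L(W)`. -/
theorem rationalEnvelope_generic (V : Type*) [AddCommGroup V] [Module ℚ V]
    [FiniteDimensional ℚ V] (W : Submodule ℂ (ℂ ⊗[ℚ] V)) :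
    (∃ (ι : Type) (_ : Countable ι) (Wi : ι → Submodule ℂ (ℂ ⊗[ℚ] V)),
        (∀ i, Wi i ≤ W ∧ Wi i ≠ W) ∧
        {w ∈ (W : Set (ℂ ⊗[ℚ] V)) |
            rationalEnvelope V w ≠ rationalEnvelopeSet V (W : Set (ℂ ⊗[ℚ] V))} ⊆
          ⋃ i, (Wi i : Set (ℂ ⊗[ℚ] V))) ∧
    ∃ w ∈ W, rationalEnvelope V w = rationalEnvelopeSet V (W : Set (ℂ ⊗[ℚ] V)) := by
  have : Countable (Submodule ℚ V) := Submodule.countable_of_isNoetherian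
  let ι := {L : Submodule ℚ V // ¬ rationalEnvelopeSet V (W : Set (ℂ ⊗[ℚ] V)) ≤ L}
  let e := (equivShrink.{0} ι).symm
  refine ⟨⟨Shrink ι, Countable.of_equiv _ e.symm, fun i => W ⊓ (e i).1.baseChange ℂ,
    fun i => ⟨inf_le_left, inf_baseChange_ne_of_not_rationalEnvelopeSet_le (e i).2⟩, ?_⟩,
    exists_rationalEnvelope_eq_rationalEnvelopeSet W⟩
  refine (setOf_rationalEnvelope_ne_subset_iUnion W).trans (Set.iUnion_subset fun L => ?_)
  exact Set.subset_iUnion_of_subset (e.symm L) (by simp)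
end

section
/- Let V be a 4-dimensional vector space over ℂ and let ω, ω′ be elements of the second exterior power Λ²V (equivalently, degree-2 homogeneous elements of the exterior algebra of V). Then there exist complex numbers a, b, not both zero, such that (a·ω + b·ω′) ∧ (a·ω + b·ω′) = 0 in Λ⁴V. (Any line in the projectivized space of 2-forms meets the quadric of forms of rank at most 2.) -/
/-! Since `finrank ℂ (⋀[ℂ]^4 V) = choose 4 4 = 1`, the map `(a, b) ↦ (a • ω + b • ω') ^ 2` is a
binary quadratic form with values in a line, and over an algebraically closed field every binary
quadratic form has a nontrivial zero. -/

open Polynomial in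
theorem IsAlgClosed.exists_ne_zero_quadratic_eq_zero {K : Type*} [Field K] [IsAlgClosed K]
    (p q r : K) : ∃ a b : K, ¬(a = 0 ∧ b = 0) ∧ p * a ^ 2 + q * a * b + r * b ^ 2 = 0 := by
  by_cases hp : p = 0
  · exact ⟨1, 0, by simp, by simp [hp]⟩
  have hdeg : (C p * X ^ 2 + C q * X + C r).degree = 2 := by compute_degree!
  obtain ⟨z, hz⟩ := IsAlgClosed.exists_root _ (by rw [hdeg]; norm_num)
  refine ⟨z, 1, by simp, ?_⟩
  simpa using hz

theorem exists_ne_zero_quadratic_eq_zero_of_finrank_eq_one {K M : Type*} [Field K]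
    [IsAlgClosed K] [AddCommGroup M] [Module K M] (hM : Module.finrank K M = 1) (x y z : M) :
    ∃ a b : K, ¬(a = 0 ∧ b = 0) ∧ (a * a) • x + (a * b) • y + (b * b) • z = 0 := by
  obtain ⟨v, -, hv⟩ := finrank_eq_one_iff'.mp hM
  obtain ⟨p, rfl⟩ := hv x
  obtain ⟨q, rfl⟩ := hv y
  obtain ⟨r, rfl⟩ := hv z
  obtain ⟨a, b, hab, h⟩ := IsAlgClosed.exists_ne_zero_quadratic_eq_zero p q r
  refine ⟨a, b, hab, ?_⟩
  linear_combination (norm := module) h • v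

theorem smul_add_smul_mul_self {R A : Type*} [CommSemiring R] [Semiring A] [Algebra R A]
    (a b : R) (x y : A) :
    (a • x + b • y) * (a • x + b • y) =
      (a * a) • (x * x) + (a * b) • (x * y + y * x) + (b * b) • (y * y) := by
  simp only [add_mul, mul_add, smul_mul_smul_comm]
  module

/-- For `ω, ω′` in the second exterior power of a 4-dimensional complex vector space
(viewed as degree-2 homogeneous elements of the exterior algebra), some nontrivial
linear combination `a·ω + b·ω′` has vanishing wedge square in `Λ⁴V`: any line in the
projectivized space of 2-forms meets the quadric of forms of rank at most 2. -/
theorem exists_combination_wedge_sq_eq_zero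
    (V : Type*) [AddCommGroup V] [Module ℂ V] [FiniteDimensional ℂ V]
    (h4 : Module.finrank ℂ V = 4)
    (ω ω' : ExteriorAlgebra ℂ V) (hω : ω ∈ ⋀[ℂ]^2 V) (hω' : ω' ∈ ⋀[ℂ]^2 V) :
    ∃ a b : ℂ, ¬(a = 0 ∧ b = 0) ∧ (a • ω + b • ω') * (a • ω + b • ω') = 0 := by
  have hmul {x y : ExteriorAlgebra ℂ V} (hx : x ∈ ⋀[ℂ]^2 V) (hy : y ∈ ⋀[ℂ]^2 V) :
      x * y ∈ ⋀[ℂ]^4 V :=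
    SetLike.GradedMul.mul_mem hx hy
  have hrank : Module.finrank ℂ (⋀[ℂ]^4 V) = 1 := by
    rw [exteriorPower.finrank_eq, h4, Nat.choose_self]
  obtain ⟨a, b, hab, h⟩ := exists_ne_zero_quadratic_eq_zero_of_finrank_eq_one hrank
    ⟨ω * ω, hmul hω hω⟩ ⟨ω * ω' + ω' * ω, add_mem (hmul hω hω') (hmul hω' hω)⟩
    ⟨ω' * ω', hmul hω' hω'⟩
  refine ⟨a, b, hab, ?_⟩
  rw [smul_add_smul_mul_self]
  exact congrArg Subtype.val h
end

section
/- Let V be a finite-dimensional vector space over ℂ and let ω ∈ Λ²V be an element of the second exterior power with ω ∧ ω = 0 in Λ⁴V. Then ω is decomposable: there exist vectors v, w ∈ V with ω = v ∧ w. -/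
open ExteriorAlgebra CliffordAlgebra

section Aux

variable {V : Type*} [AddCommGroup V] [Module ℂ V]

private lemma wedge_anticomm (x y : V) :
    ι ℂ x * ι ℂ y = -(ι ℂ y * ι ℂ x) := by
  have := CliffordAlgebra.ι_mul_ι_add_swap (Q := (0 : QuadraticForm ℂ V)) x y
  rw [QuadraticMap.polar] at this
  simp only [QuadraticMap.zero_apply, sub_zero, zero_sub, neg_zero, map_zero] at this
  linear_combination (norm := noncomm_ring) this

private lemma contract_ι_mul_ι (φ : Module.Dual ℂ V) (x y : V) :
    contractLeft (Q := (0 : QuadraticForm ℂ V)) φ (ι ℂ x * ι ℂ y)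
      = ι ℂ (φ x • y - φ y • x) := by
  rw [contractLeft_ι_mul, contractLeft_ι, map_sub, map_smul, map_smul]
  rw [← Algebra.commutes, ← Algebra.smul_def]

private lemma exists_contract_eq_ι
    {ω : ExteriorAlgebra ℂ V}
    (hω : ω ∈ (LinearMap.range (ι ℂ : V →ₗ[ℂ] _)) * LinearMap.range (ι ℂ : V →ₗ[ℂ] _))
    (φ : Module.Dual ℂ V) :
    ∃ v : V, contractLeft (Q := (0 : QuadraticForm ℂ V)) φ ω = ι ℂ v := by
  refine Submodule.mul_induction_on hω (fun m hm n hn => ?_) (fun x y hx hy => ?_)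
  · obtain ⟨a, rfl⟩ := hm
    obtain ⟨b, rfl⟩ := hn
    exact ⟨φ a • b - φ b • a, contract_ι_mul_ι φ a b⟩
  · obtain ⟨v, hv⟩ := hx
    obtain ⟨w, hw⟩ := hy
    exact ⟨v + w, by rw [map_add, hv, hw, map_add]⟩

private lemma contract_mul_deg_two
    {ω : ExteriorAlgebra ℂ V}
    (hω : ω ∈ (LinearMap.range (ι ℂ : V →ₗ[ℂ] _)) * LinearMap.range (ι ℂ : V →ₗ[ℂ] _))
    (φ : Module.Dual ℂ V) (x : ExteriorAlgebra ℂ V) :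
    contractLeft (Q := (0 : QuadraticForm ℂ V)) φ (ω * x)
      = contractLeft (Q := (0 : QuadraticForm ℂ V)) φ ω * x
        + ω * contractLeft (Q := (0 : QuadraticForm ℂ V)) φ x := by
  refine Submodule.mul_induction_on hω (fun m hm n hn => ?_) (fun a b hx hy => ?_)
  · obtain ⟨a, rfl⟩ := hm
    obtain ⟨b, rfl⟩ := hn
    rw [mul_assoc, contractLeft_ι_mul, contractLeft_ι_mul, contract_ι_mul_ι,
      map_sub, map_smul, map_smul]
    simp only [mul_sub, smul_mul_assoc, mul_smul_comm, sub_mul, mul_assoc]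
    abel
  · simp only [add_mul, map_add, hx, hy]
    abel

private lemma ι_mul_deg_two_comm
    {ω : ExteriorAlgebra ℂ V}
    (hω : ω ∈ (LinearMap.range (ι ℂ : V →ₗ[ℂ] _)) * LinearMap.range (ι ℂ : V →ₗ[ℂ] _))
    (v : V) : ι ℂ v * ω = ω * ι ℂ v := by
  refine Submodule.mul_induction_on hω (fun m hm n hn => ?_) (fun a b hx hy => ?_)
  · obtain ⟨a, rfl⟩ := hm
    obtain ⟨b, rfl⟩ := hn
    rw [← mul_assoc, wedge_anticomm v a, neg_mul, mul_assoc, wedge_anticomm v b,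
      mul_neg, neg_neg, mul_assoc]
  · rw [mul_add, add_mul, hx, hy]

private lemma eq_zero_of_contract_contract
    [FiniteDimensional ℂ V] {ω : ExteriorAlgebra ℂ V}
    (hω : ω ∈ (LinearMap.range (ι ℂ : V →ₗ[ℂ] _)) * LinearMap.range (ι ℂ : V →ₗ[ℂ] _))
    (h0 : ∀ φ ψ : Module.Dual ℂ V,
      contractLeft (Q := (0 : QuadraticForm ℂ V)) ψ
        (contractLeft (Q := (0 : QuadraticForm ℂ V)) φ ω) = 0) :
    ω = 0 := by
  classical
  set n := Module.finrank ℂ V with hn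
  set b := Module.finBasis ℂ V with hb
  have expand : ∀ z : V, (∑ a : Fin n, (b.coord a) z • ι ℂ (b a)) = ι ℂ z := by
    intro z
    calc ∑ a : Fin n, (b.coord a) z • ι ℂ (b a)
        = ι ℂ (∑ a : Fin n, b.repr z a • b a) := by
          rw [map_sum]
          exact Finset.sum_congr rfl fun a _ => by
            rw [map_smul, Module.Basis.coord_apply]
      _ = ι ℂ z := by rw [b.sum_repr z]
  have key : ∀ x y : V, ι ℂ x * ι ℂ y =
      (∑ a : Fin n, ∑ c : Fin n,
        ((b.coord a) x * (b.coord c) y) • (ι ℂ (b a) * ι ℂ (b c))) := by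
    intro x y
    rw [← expand x, ← expand y, Finset.sum_mul]
    refine Finset.sum_congr rfl fun a _ => ?_
    rw [smul_mul_assoc, Finset.mul_sum, Finset.smul_sum]
    refine Finset.sum_congr rfl fun c _ => ?_
    rw [mul_smul_comm, smul_smul]
  have main : (2 : ℂ) • ω =
      ∑ a : Fin n, ∑ c : Fin n,
        (algebraMapInv (contractLeft (Q := (0 : QuadraticForm ℂ V)) (b.coord c)
          (contractLeft (Q := (0 : QuadraticForm ℂ V)) (b.coord a) ω)))
          • (ι ℂ (b a) * ι ℂ (b c)) := by
    clear h0
    refine Submodule.mul_induction_on hω (fun m hm n' hn' => ?_) (fun x y hx hy => ?_)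
    · obtain ⟨x, rfl⟩ := hm
      obtain ⟨y, rfl⟩ := hn'
      have hc : ∀ a c : Fin n,
          (algebraMapInv (contractLeft (Q := (0 : QuadraticForm ℂ V)) (b.coord c)
            (contractLeft (Q := (0 : QuadraticForm ℂ V)) (b.coord a) (ι ℂ x * ι ℂ y))))
          = (b.coord a) x * (b.coord c) y - (b.coord a) y * (b.coord c) x := by
        intro a c
        rw [contract_ι_mul_ι, contractLeft_ι, algebraMap_leftInverse]
        simp [mul_comm]
      simp only [hc, sub_smul, Finset.sum_sub_distrib]
      rw [← key x y, ← key y x, wedge_anticomm y x, sub_neg_eq_add, two_smul]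
    · rw [smul_add, hx, hy, ← Finset.sum_add_distrib]
      refine Finset.sum_congr rfl fun a _ => ?_
      rw [← Finset.sum_add_distrib]
      refine Finset.sum_congr rfl fun c _ => ?_
      rw [map_add, map_add, map_add, add_smul]
  simp only [h0, map_zero, zero_smul, Finset.sum_const_zero] at main
  have : ω = (2 : ℂ)⁻¹ • ((2 : ℂ) • ω) := by
    rw [smul_smul]
    norm_num
  rw [this, main, smul_zero]

end Aux

/-- An element `ω` of the second exterior power of a finite-dimensional complex vector
space (a degree-2 homogeneous element of the exterior algebra) whose wedge square
vanishes in `Λ⁴V` is decomposable: `ω = v ∧ w` for some vectors `v, w ∈ V`. -/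
theorem decomposable_of_wedge_sq_eq_zero
    (V : Type*) [AddCommGroup V] [Module ℂ V] [FiniteDimensional ℂ V]
    (ω : ExteriorAlgebra ℂ V) (hω : ω ∈ ⋀[ℂ]^2 V) (h : ω * ω = 0) :
    ∃ v w : V, ω = ExteriorAlgebra.ι ℂ v * ExteriorAlgebra.ι ℂ w := by
  classical
  by_cases h0 : ω = 0
  · exact ⟨0, 0, by simp [h0]⟩
  have hω2 : ω ∈ (LinearMap.range (ι ℂ : V →ₗ[ℂ] _))
      * LinearMap.range (ι ℂ : V →ₗ[ℂ] _) := by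
    rw [← pow_two]; exact hω
  have hnall : ¬ ∀ φ ψ : Module.Dual ℂ V,
      contractLeft (Q := (0 : QuadraticForm ℂ V)) ψ
        (contractLeft (Q := (0 : QuadraticForm ℂ V)) φ ω) = 0 :=
    fun hall => h0 (eq_zero_of_contract_contract hω2 hall)
  push_neg at hnall
  obtain ⟨φ, ψ, hne⟩ := hnall
  obtain ⟨v, hv⟩ := exists_contract_eq_ι hω2 φ
  obtain ⟨w', hw'⟩ := exists_contract_eq_ι hω2 ψ
  have hc : ψ v ≠ 0 := by
    intro hzero
    apply hne
    rw [hv, contractLeft_ι, hzero, map_zero]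
  have h1 : ι ℂ v * ω = 0 := by
    have h3 := contract_mul_deg_two hω2 φ ω
    rw [h, map_zero, hv, ← ι_mul_deg_two_comm hω2 v] at h3
    have h4 : (2 : ℂ) • (ι ℂ v * ω) = 0 := by rw [two_smul]; exact h3.symm
    calc ι ℂ v * ω = (2 : ℂ)⁻¹ • ((2 : ℂ) • (ι ℂ v * ω)) := by
          rw [smul_smul]; norm_num
      _ = 0 := by rw [h4, smul_zero]
  have h3 : contractLeft (Q := (0 : QuadraticForm ℂ V)) ψ (ι ℂ v * ω)
      = ψ v • ω - ι ℂ v * (contractLeft (Q := (0 : QuadraticForm ℂ V)) ψ ω) := by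
    rw [contractLeft_ι_mul]
  rw [h1, map_zero, hw'] at h3
  have h2 : ψ v • ω = ι ℂ v * ι ℂ w' := sub_eq_zero.mp h3.symm
  refine ⟨v, (ψ v)⁻¹ • w', ?_⟩
  rw [map_smul, mul_smul_comm, ← h2, smul_smul, inv_mul_cancel₀ hc, one_smul]
end

section
/- Let G be a group, N = [G,G] its commutator subgroup, and G₂ = G/[[G,G],G] the quotient by the third term of the lower central series. Then the kernel of the inflation map H²(G/N; ℚ) → H²(G; ℚ) (induced by G → G/N) coincides with the kernel of the inflation map H²(G/N; ℚ) → H²(G₂; ℚ) (induced by the quotient map G₂ → G₂/[G₂,G₂] ≅ G/N), where all cohomology is taken with trivial coefficients ℚ. -/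
/-!
If the inflation of a class `[f] ∈ H²(Q; ℚ)` along `φ : G →* Q` dies, say `f ∘ (φ × φ) = d y`,
then, `f` being normalized, `y - y 1` is additive under multiplication by `ker φ` on either side.
Such a function vanishes on `⁅ker φ, G⁆`, so `y` descends to `G ⧸ ⁅ker φ, G⁆` and the class
already dies there. The reverse inclusion is functoriality of inflation.
-/

open groupCohomology

/-- The map on 2-cocycles (with trivial `ℚ`-coefficients) induced by precomposition
with a group homomorphism `φ : G →* Q`. -/
noncomputable def pullTwoCocycles {G Q : Type} [Group G] [Group Q] (φ : G →* Q) :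
    cocycles₂ (Rep.trivial ℚ Q ℚ) →ₗ[ℚ] cocycles₂ (Rep.trivial ℚ G ℚ) :=
  LinearMap.restrict (LinearMap.funLeft ℚ ℚ (Prod.map φ φ))
    (fun f hf => by
      rw [mem_cocycles₂_def] at hf ⊢
      intro g h j
      simpa [LinearMap.funLeft, Rep.trivial_ρ_apply, Prod.map, map_mul] using
        hf (φ g) (φ h) (φ j))

/-- Degree-2 group cohomology as the quotient `Z²(G, A) ⧸ B²(G, A)` (the older Mathlib
definition of `groupCohomology.H2`). -/
abbrev quotH2 {k G : Type} [CommRing k] [Group G] (A : Rep k G) :=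
  cocycles₂ A ⧸ LinearMap.range ((d₁₂ A).hom.codRestrict (cocycles₂ A) fun c =>
    d₁₂_comp_d₂₃_apply A c)

/-- The map `H²(Q;ℚ) → H²(G;ℚ)` on degree-2 group cohomology with trivial coefficients
`ℚ` induced by a group homomorphism `φ : G →* Q`. -/
noncomputable def pullH2 {G Q : Type} [Group G] [Group Q] (φ : G →* Q) :
    quotH2 (Rep.trivial ℚ Q ℚ) →ₗ[ℚ] quotH2 (Rep.trivial ℚ G ℚ) :=
  Submodule.mapQ _ _ (pullTwoCocycles φ)
    (by
      rintro ⟨f, hf⟩ ⟨y, hy⟩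
      refine Submodule.mem_comap.2 ⟨LinearMap.funLeft ℚ ℚ φ y, ?_⟩
      apply Subtype.ext
      have hy' := congrArg Subtype.val hy
      funext gh
      have := congrFun hy' (Prod.map φ φ gh)
      simp only [LinearMap.codRestrict_apply] at hy' this ⊢
      simp only [pullTwoCocycles, LinearMap.restrict_apply, LinearMap.funLeft_apply,
        d₁₂_hom_apply, Rep.trivial_ρ_apply, Prod.map, map_mul] at this ⊢
      refine Eq.trans ?_ this
      change (d₁₂ (Rep.trivial ℚ G ℚ)).hom (LinearMap.funLeft ℚ ℚ φ y) gh =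
        (d₁₂ (Rep.trivial ℚ Q ℚ)).hom y (φ gh.1, φ gh.2)
      simp [map_mul])

/-- `[[G,G],G] ≤ [G,G]`, so the abelianization map kills `[[G,G],G]`. -/
theorem lcs3_le_ker_abelianizationOf (G : Type) [Group G] :
    ∀ x ∈ ⁅commutator G, (⊤ : Subgroup G)⁆, Abelianization.of (G := G) x = 1 := by
  intro x hx
  have hle : ⁅commutator G, (⊤ : Subgroup G)⁆ ≤ commutator G := by
    rw [commutator_def]
    exact Subgroup.commutator_mono le_top le_rfl
  exact (QuotientGroup.eq_one_iff x).2 (hle hx)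

section

variable {G H Q : Type} [Group G] [Group H] [Group Q]

lemma mk_mem_ker_pullH2_iff (φ : G →* Q) (f : cocycles₂ (Rep.trivial ℚ Q ℚ)) :
    (Submodule.Quotient.mk f : quotH2 (Rep.trivial ℚ Q ℚ)) ∈ LinearMap.ker (pullH2 φ) ↔
      ∃ y : G → ℚ, ∀ g h : G, y h - y (g * h) + y g = f (φ g, φ h) := by
  rw [LinearMap.mem_ker, pullH2, Submodule.mapQ_apply, Submodule.Quotient.mk_eq_zero,
    LinearMap.mem_range]
  refine exists_congr fun y => ?_
  rw [Subtype.ext_iff, funext_iff, Prod.forall]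
  rfl

lemma pullH2_comp (ψ : H →* Q) (π : G →* H) :
    pullH2 (ψ.comp π) = pullH2 π ∘ₗ pullH2 ψ := by
  ext
  rfl

lemma eq_zero_of_mem_commutator_top {A : Type} [AddCommGroup A] {K : Subgroup G} [K.Normal]
    {z : G → A} (hz : ∀ g, ∀ m ∈ K, z (g * m) = z g + z m ∧ z (m * g) = z m + z g)
    {x : G} (hx : x ∈ ⁅K, (⊤ : Subgroup G)⁆) : z x = 0 := by
  have hz_one : z 1 = 0 := by simpa using (hz 1 1 K.one_mem).1
  have hz_inv : ∀ m ∈ K, z m⁻¹ = -z m := fun m hm => by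
    have := (hz m m⁻¹ (K.inv_mem hm)).1
    rw [mul_inv_cancel, hz_one] at this
    exact (neg_eq_of_add_eq_zero_right this.symm).symm
  have hz_conj : ∀ g, ∀ m ∈ K, z (g * m * g⁻¹) = z m := fun g m hm => by
    have := (hz g (g * m * g⁻¹) (‹K.Normal›.conj_mem m hm g)).2
    rw [inv_mul_cancel_right, (hz g m hm).1] at this
    exact add_right_cancel (this.symm.trans (add_comm _ _))
  let L : Subgroup G :=
    { carrier := {x | x ∈ K ∧ z x = 0}
      one_mem' := ⟨K.one_mem, hz_one⟩
      mul_mem' := fun ⟨ha, hza⟩ ⟨hb, hzb⟩ =>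
        ⟨K.mul_mem ha hb, by rw [(hz _ _ hb).1, hza, hzb, add_zero]⟩
      inv_mem' := fun ⟨ha, hza⟩ => ⟨K.inv_mem ha, by rw [hz_inv _ ha, hza, neg_zero]⟩ }
  suffices ⁅K, (⊤ : Subgroup G)⁆ ≤ L from (this hx).2
  refine Subgroup.commutator_le.2 fun m hm g _ => ⟨?_, ?_⟩
  · exact Subgroup.commutator_le_left K ⊤ (Subgroup.commutator_mem_commutator hm trivial)
  · have hconj : g * m⁻¹ * g⁻¹ ∈ K := ‹K.Normal›.conj_mem _ (K.inv_mem hm) g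
    rw [commutatorElement_def, mul_assoc, mul_assoc, ← mul_assoc g, (hz m _ hconj).1,
      hz_conj g _ (K.inv_mem hm), hz_inv m hm, add_neg_cancel]

variable {φ : G →* Q} {f : cocycles₂ (Rep.trivial ℚ Q ℚ)} {y : G → ℚ}

lemma apply_mul_of_mem_ker_of_d₁₂_eq (hy : ∀ g h : G, y h - y (g * h) + y g = f (φ g, φ h))
    (g : G) {m : G} (hm : m ∈ φ.ker) :
    y (g * m) = y g + y m - y 1 ∧ y (m * g) = y m + y g - y 1 := by
  have hf₁ : f (1, 1) = y 1 := by simpa using (hy 1 1).symm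
  have hf_snd : f (φ g, 1) = y 1 := by
    simpa [Rep.trivial_ρ_apply, hf₁] using cocycles₂_map_one_snd f (φ g)
  have hf_fst : f (1, φ g) = y 1 := (cocycles₂_map_one_fst f (φ g)).trans hf₁
  have hr := hy g m
  have hl := hy m g
  rw [MonoidHom.mem_ker.1 hm] at hr hl
  constructor <;> linarith

lemma apply_mul_of_mem_commutator_of_d₁₂_eq
    (hy : ∀ g h : G, y h - y (g * h) + y g = f (φ g, φ h))
    (g : G) {n : G} (hn : n ∈ ⁅φ.ker, (⊤ : Subgroup G)⁆) : y (g * n) = y g := by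
  have hz : y n - y 1 = 0 := by
    refine eq_zero_of_mem_commutator_top (z := fun x => y x - y 1) (fun a m hm => ?_) hn
    obtain ⟨hr, hl⟩ := apply_mul_of_mem_ker_of_d₁₂_eq hy a hm
    constructor <;> linarith
  have := (apply_mul_of_mem_ker_of_d₁₂_eq hy g (Subgroup.commutator_le_left _ _ hn)).1
  linarith

theorem ker_pullH2_eq_ker_pullH2_lift (φ : G →* Q) {N : Subgroup G} [N.Normal]
    (hN : N ≤ ⁅φ.ker, ⊤⁆) :
    LinearMap.ker (pullH2 φ) =
      LinearMap.ker
        (pullH2 (QuotientGroup.lift N φ (hN.trans (Subgroup.commutator_le_left _ _)))) := by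
  refine le_antisymm (fun x hx => ?_) ?_
  · obtain ⟨f, rfl⟩ := Submodule.Quotient.mk_surjective _ x
    obtain ⟨y, hy⟩ := (mk_mem_ker_pullH2_iff φ f).1 hx
    refine (mk_mem_ker_pullH2_iff _ f).2 ⟨fun q => Quotient.liftOn' q y fun a b hab => ?_, ?_⟩
    · rw [← apply_mul_of_mem_commutator_of_d₁₂_eq hy a (hN (QuotientGroup.leftRel_apply.1 hab)),
        mul_inv_cancel_left]
    · rintro ⟨g⟩ ⟨h⟩
      exact hy g h
  · rw [show pullH2 φ = _ from pullH2_comp (QuotientGroup.lift N φ _) (QuotientGroup.mk' N)]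
    exact LinearMap.ker_le_ker_comp _ _

end

/-- With `N = [G,G]` and `G₂ = G/[[G,G],G]`, the kernel of the inflation map
`H²(G/N;ℚ) → H²(G;ℚ)` (induced by `G → G/N`) coincides with the kernel of the
inflation map `H²(G/N;ℚ) → H²(G₂;ℚ)` (induced by the quotient map
`G₂ → G₂/[G₂,G₂] ≅ G/N`, i.e. by the homomorphism `G₂ → G/N` descended from the
abelianization map of `G`). -/
theorem ker_inflation_eq_ker_inflation_lcs3
    (G : Type) [Group G] :
    LinearMap.ker (pullH2 (Abelianization.of (G := G))) =
      LinearMap.ker (pullH2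
        (QuotientGroup.lift ⁅commutator G, (⊤ : Subgroup G)⁆
          (Abelianization.of (G := G)) (lcs3_le_ker_abelianizationOf G))) :=
  ker_pullH2_eq_ker_pullH2_lift _ (by rw [Abelianization.ker_of])
end

section
/- Let S be a family of polynomials in n variables with complex coefficients and let Z = {x ∈ ℂⁿ : p(x) = 0 for all p ∈ S} be their common zero set. If Z is countable, then Z is finite. (Equivalently, an algebraic subset of ℂⁿ that is infinite is uncountable.) -/
/-!
Let `Z` be the zero locus of an ideal `I ⊆ k[X₁, …, Xₙ]`, `k` algebraically closed and
uncountable, and fix a coordinate `i`. For the uncountably many `c` outside the projection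
`xᵢ(Z)`, the Nullstellensatz makes `Xᵢ - c` invertible modulo `I`. Since `k[X]/I` has countable
dimension, the inverses `(Xᵢ - c)⁻¹` are linearly dependent, and clearing denominators in a
relation among them gives a nonzero `q` with `q(Xᵢ) ∈ I`. So `xᵢ(Z)` lies among the roots of `q`,
and `Z` lies in a product of finite sets.
-/

universe u v

open Polynomial in
theorem Transcendental.linearIndependent_inverse_sub {K A : Type*} [Field K] [CommRing A]
    [Algebra K A] {x : A} (H : Transcendental K x) {T : Set K}
    (hT : ∀ c ∈ T, IsUnit (x - algebraMap K A c)) :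
    LinearIndependent K fun c : T ↦ Ring.inverse (x - algebraMap K A c) := by
  classical
  refine linearIndependent_iff'.2 fun s m hm c hc ↦ ?_
  let p : K[X] := ∑ d ∈ s, C (m d) * Lagrange.nodal (s.erase d) Subtype.val
  have hp : Polynomial.aeval x p = 0 := by
    calc Polynomial.aeval x p
        = ∑ d ∈ s, m d • (Polynomial.aeval x (Lagrange.nodal s Subtype.val) *
            Ring.inverse (x - algebraMap K A d)) := by
          rw [map_sum]
          refine Finset.sum_congr rfl fun d hd ↦ ?_
          rw [Lagrange.nodal_eq_mul_nodal_erase hd, map_mul, map_mul, aeval_C, ← Algebra.smul_def,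
            map_sub, aeval_X, aeval_C, mul_comm, ← mul_assoc,
            Ring.inverse_mul_cancel _ (hT d d.2), one_mul]
      _ = Polynomial.aeval x (Lagrange.nodal s Subtype.val) *
            ∑ d ∈ s, m d • Ring.inverse (x - algebraMap K A d) := by
          simp only [Finset.mul_sum, mul_smul_comm]
      _ = 0 := by rw [hm, mul_zero]
  have hpc : p.eval ↑c = m c * (Lagrange.nodal (s.erase c) Subtype.val).eval (c : K) := by
    rw [eval_finsetSum, Finset.sum_eq_single c (fun d hd hdc ↦ ?_) (absurd hc)]
    · rw [eval_mul, eval_C]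
    · rw [eval_mul, Lagrange.eval_nodal_at_node (Finset.mem_erase.2 ⟨hdc.symm, hc⟩), mul_zero]
  have hnodal : (Lagrange.nodal (s.erase c) Subtype.val).eval (c : K) ≠ 0 :=
    Lagrange.eval_nodal_not_at_node fun d hd ↦
      Subtype.coe_ne_coe.2 (Finset.ne_of_mem_erase hd).symm
  rw [transcendental_iff.1 H p hp, eval_zero, eq_comm, mul_eq_zero] at hpc
  exact hpc.resolve_right hnodal

theorem IsAlgebraic.of_isUnit_sub_of_lift_rank_lt {K : Type u} {A : Type v} [Field K] [CommRing A]
    [Algebra K A] {x : A} {T : Set K} (hT : ∀ c ∈ T, IsUnit (x - algebraMap K A c))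
    (hrank : Cardinal.lift.{u} (Module.rank K A) < Cardinal.lift.{v} (Cardinal.mk T)) :
    IsAlgebraic K x := by
  by_contra H
  exact hrank.not_ge (Transcendental.linearIndependent_inverse_sub H hT).cardinal_lift_le_rank

namespace MvPolynomial

theorem rank_quotient_le_aleph0 {K σ : Type*} [Field K] [Countable σ]
    (I : Ideal (MvPolynomial σ K)) : Module.rank K (MvPolynomial σ K ⧸ I) ≤ Cardinal.aleph0 :=
  calc Module.rank K (MvPolynomial σ K ⧸ I)
      ≤ Module.rank K (MvPolynomial σ K) :=
        LinearMap.rank_le_of_surjective (Ideal.Quotient.mkₐ K I).toLinearMap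
          (Ideal.Quotient.mkₐ_surjective K I)
    _ ≤ Cardinal.aleph0 := by
      rw [rank_eq_lift, Cardinal.lift_le_aleph0]
      exact Cardinal.mk_le_aleph0

theorem isUnit_mk_of_forall_eval_ne_zero {k σ : Type*} [Field k] [IsAlgClosed k] [Finite σ]
    {I : Ideal (MvPolynomial σ k)} {p : MvPolynomial σ k}
    (hp : ∀ x ∈ zeroLocus k I, eval x p ≠ 0) : IsUnit (Ideal.Quotient.mk I p) := by
  have hempty : zeroLocus k (I ⊔ Ideal.span {p}) = ∅ :=
    Set.eq_empty_of_forall_notMem fun x hx ↦ hp x (zeroLocus_anti_mono le_sup_left hx)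
      (hx p (Ideal.mem_sup_right (Ideal.mem_span_singleton_self p)))
  have htop : I ⊔ Ideal.span {p} = ⊤ := by
    rw [← Ideal.radical_eq_top, ← vanishingIdeal_zeroLocus_eq_radical (K := k), hempty,
      vanishingIdeal_empty]
  rw [← Ideal.span_singleton_eq_top, ← Set.image_singleton, ← Ideal.map_span (Ideal.Quotient.mk I),
    ← Ideal.map_top (Ideal.Quotient.mk I), ← htop, Ideal.map_sup, Ideal.map_quotient_self,
    bot_sup_eq]

theorem finite_image_eval_zeroLocus_of_isAlgebraic {k σ : Type*} [Field k]
    {I : Ideal (MvPolynomial σ k)} {i : σ} (h : IsAlgebraic k (Ideal.Quotient.mkₐ k I (X i))) :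
    ((fun x ↦ x i) '' zeroLocus k I).Finite := by
  obtain ⟨q, hq0, hq⟩ := h
  have hqI : Polynomial.aeval (X i) q ∈ I := by
    rwa [Polynomial.aeval_algHom_apply, Ideal.Quotient.mkₐ_eq_mk,
      Ideal.Quotient.eq_zero_iff_mem] at hq
  refine (q.rootSet_finite k).subset ?_
  rintro _ ⟨x, hx, rfl⟩
  have hqx := hx _ hqI
  rw [← Polynomial.aeval_algHom_apply, aeval_X] at hqx
  exact (Polynomial.mem_rootSet_of_ne hq0).2 hqx

theorem finite_zeroLocus_of_countable {k σ : Type*} [Field k] [IsAlgClosed k] [Uncountable k]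
    [Finite σ] {I : Ideal (MvPolynomial σ k)} (hI : (zeroLocus k I).Countable) :
    (zeroLocus k I).Finite := by
  have hproj (i : σ) : ((fun x ↦ x i) '' zeroLocus k I).Finite := by
    set T := ((fun x ↦ x i) '' zeroLocus k I)ᶜ
    have hT (c : k) (hc : c ∈ T) :
        IsUnit (Ideal.Quotient.mkₐ k I (X i) - algebraMap k _ c) := by
      have := isUnit_mk_of_forall_eval_ne_zero (I := I) (p := X i - C c) fun x hx h ↦
        hc ⟨x, hx, by simpa [sub_eq_zero] using h⟩
      rwa [← AlgHom.commutes (Ideal.Quotient.mkₐ k I), algebraMap_eq, ← map_sub,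
        Ideal.Quotient.mkₐ_eq_mk]
    have hTcard : Cardinal.mk T = Cardinal.mk k := Cardinal.mk_compl_of_infinite _
      ((hI.image _).le_aleph0.trans_lt (Cardinal.aleph0_lt_mk_iff.2 ‹_›))
    refine finite_image_eval_zeroLocus_of_isAlgebraic
      (IsAlgebraic.of_isUnit_sub_of_lift_rank_lt hT ?_)
    refine (Cardinal.lift_le_aleph0.2 (rank_quotient_le_aleph0 I)).trans_lt ?_
    rw [hTcard, Cardinal.aleph0_lt_lift, Cardinal.aleph0_lt_mk_iff]
    infer_instance
  exact (Set.Finite.pi hproj).subset fun x hx i _ ↦ ⟨x, hx, rfl⟩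

end MvPolynomial

open MvPolynomial

/-- A common zero set in `ℂⁿ` of a family of polynomials which is countable is in fact
finite: an infinite algebraic subset of `ℂⁿ` is uncountable. -/
theorem finite_of_countable_zero_set
    (n : ℕ) (S : Set (MvPolynomial (Fin n) ℂ))
    (hc : {x : Fin n → ℂ | ∀ p ∈ S, MvPolynomial.eval x p = 0}.Countable) :
    {x : Fin n → ℂ | ∀ p ∈ S, MvPolynomial.eval x p = 0}.Finite := by
  have : Uncountable ℂ := Complex.ofReal_injective.uncountable
  have hZ : {x : Fin n → ℂ | ∀ p ∈ S, eval x p = 0} = zeroLocus ℂ (Ideal.span S) :=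
    (zeroLocus_span S).symm
  rw [hZ] at hc ⊢
  exact finite_zeroLocus_of_countable hc
end
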